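/- arXiv:2303.00869 — 8 statements merged into one kernel-verified Lean document; each statement's English description precedes it below -/
import Mathlib

section
/- Let g ≥ 0 be an integer, ε ∈ [0,1], and let p(q_i, q_j) = 1{q_j − q_i ≥ g+1} + (1−ε)·1{0 < q_j − q_i ≤ g} + ε·1{0 < q_i − q_j ≤ g} + 1{q_i = q_j and i < j}, for nonnegative integers q_i, q_j and distinct indices i, j. Then q_i·p(q_i,q_j) + q_j·p(q_j,q_i) ≤ (q_i + q_j)/2 + g·1{ε > 1/2}. -/
/-! With `qi ≤ qj`, the job sees equal queues, a gap of at most `g` (compared wrongly with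
probability `ε`), or a gap larger than `g` (always compared correctly). Equal queues give exactly
the average, a large gap sends the job to the shorter queue, and a small gap `d` gives
`qi + ε d`, which exceeds the average `qi + d / 2` only when `ε > 1/2`, and then by at most
`d / 2 ≤ g / 2`. -/

/-- Join probability under the Po2-(g,ε) scheme with load-dependent errors. -/
noncomputable def po2geProb (g : ℕ) (ε : ℝ) (qi qj i j : ℕ) : ℝ :=
  (if (g : ℤ) + 1 ≤ (qj : ℤ) - (qi : ℤ) then 1 else 0)
  + (1 - ε) * (if 0 < (qj : ℤ) - (qi : ℤ) ∧ (qj : ℤ) - (qi : ℤ) ≤ (g : ℤ) then 1 else 0)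
  + ε * (if 0 < (qi : ℤ) - (qj : ℤ) ∧ (qi : ℤ) - (qj : ℤ) ≤ (g : ℤ) then 1 else 0)
  + (if qi = qj ∧ i < j then 1 else 0)

section po2geProb

variable (g : ℕ) (ε : ℝ)

lemma po2geProb_self_add_swap {i j : ℕ} (hij : i ≠ j) (q : ℕ) :
    po2geProb g ε q q i j + po2geProb g ε q q j i = 1 := by
  simp only [po2geProb, true_and]
  split_ifs <;> first | omega | ring

variable {qi qj : ℕ} (i j : ℕ)

lemma po2geProb_eq_one_of_add_lt (h : qi + g < qj) : po2geProb g ε qi qj i j = 1 := by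
  simp only [po2geProb]
  split_ifs <;> first | omega | ring

lemma po2geProb_eq_zero_of_add_lt (h : qj + g < qi) : po2geProb g ε qi qj i j = 0 := by
  simp only [po2geProb]
  split_ifs <;> first | omega | ring

lemma po2geProb_eq_one_sub_of_lt_of_le_add (h₁ : qi < qj) (h₂ : qj ≤ qi + g) :
    po2geProb g ε qi qj i j = 1 - ε := by
  simp only [po2geProb]
  split_ifs <;> first | omega | ring

lemma po2geProb_eq_of_gt_of_le_add (h₁ : qj < qi) (h₂ : qi ≤ qj + g) :
    po2geProb g ε qi qj i j = ε := by
  simp only [po2geProb]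
  split_ifs <;> first | omega | ring

end po2geProb

lemma po2ge_weighted_bound_of_le (g : ℕ) (ε : ℝ) (hε1 : ε ≤ 1)
    {qi qj i j : ℕ} (hij : i ≠ j) (h : qi ≤ qj) :
    (qi : ℝ) * po2geProb g ε qi qj i j + (qj : ℝ) * po2geProb g ε qj qi j i
      ≤ ((qi : ℝ) + (qj : ℝ)) / 2 + (g : ℝ) * (if ε > 1/2 then 1 else 0) := by
  have hslack : (0 : ℝ) ≤ (g : ℝ) * (if ε > 1/2 then 1 else 0) := by positivity
  rcases h.eq_or_lt with rfl | hlt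
  · rw [← mul_add, po2geProb_self_add_swap g ε hij]
    linarith
  have hlt' : (qi : ℝ) < qj := by exact_mod_cast hlt
  rcases le_or_gt qj (qi + g) with hnear | hfar
  · rw [po2geProb_eq_one_sub_of_lt_of_le_add g ε i j hlt hnear,
      po2geProb_eq_of_gt_of_le_add g ε j i hlt hnear]
    have hgap : (qj : ℝ) ≤ qi + g := by exact_mod_cast hnear
    split_ifs <;> nlinarith
  · rw [po2geProb_eq_one_of_add_lt g ε i j hfar, po2geProb_eq_zero_of_add_lt g ε j i hfar]
    linarith

theorem po2ge_weighted_bound_general (g : ℕ) (ε : ℝ) (hε1 : ε ≤ 1)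
    (qi qj i j : ℕ) (hij : i ≠ j) :
    (qi : ℝ) * po2geProb g ε qi qj i j + (qj : ℝ) * po2geProb g ε qj qi j i
      ≤ ((qi : ℝ) + (qj : ℝ)) / 2 + (g : ℝ) * (if ε > 1/2 then 1 else 0) := by
  rcases le_total qi qj with h | h
  · exact po2ge_weighted_bound_of_le g ε hε1 hij h
  · have := po2ge_weighted_bound_of_le g ε hε1 hij.symm h
    linarith

theorem po2ge_weighted_bound (g : ℕ) (ε : ℝ) (hε0 : 0 ≤ ε) (hε1 : ε ≤ 1)
    (qi qj i j : ℕ) (hij : i ≠ j) :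
    (qi : ℝ) * po2geProb g ε qi qj i j + (qj : ℝ) * po2geProb g ε qj qi j i
      ≤ ((qi : ℝ) + (qj : ℝ)) / 2 + (g : ℝ) * (if ε > 1/2 then 1 else 0) :=
  po2ge_weighted_bound_general g ε hε1 qi qj i j hij
end

section
/- Let ε ∈ [0,1] and define p(q_i, q_j) = (1−ε)·1{q_i < q_j} + ε·1{q_i > q_j} + 1{q_i = q_j and i < j} for nonnegative integers q_i, q_j and distinct indices i, j. Then q_i·p(q_i,q_j) + q_j·p(q_j,q_i) ≤ (q_i + q_j)·max(1/2, ε). -/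
/-
A job joins the shorter queue with probability `1 - ε` and the longer one with probability `ε`,
so the weighted load `q_i p(q_i,q_j) + q_j p(q_j,q_i)` is `(1 - ε) min + ε max`: at most the
average of the two loads when `ε ≤ 1/2`, and at most `ε (q_i + q_j)` otherwise. Ties are broken
deterministically, so there the weighted load is just the common queue length.
-/

/-- Join probability under the Po2-ε scheme with load-independent errors. -/
noncomputable def po2epsProb (ε : ℝ) (qi qj i j : ℕ) : ℝ :=
  (1 - ε) * (if qi < qj then 1 else 0) + ε * (if qj < qi then 1 else 0)
  + (if qi = qj ∧ i < j then 1 else 0)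

theorem po2epsProb_of_lt (ε : ℝ) {qi qj : ℕ} (h : qi < qj) (i j : ℕ) :
    po2epsProb ε qi qj i j = 1 - ε := by
  simp [po2epsProb, h, h.not_gt, h.ne]

theorem po2epsProb_of_gt (ε : ℝ) {qi qj : ℕ} (h : qj < qi) (i j : ℕ) :
    po2epsProb ε qi qj i j = ε := by
  simp [po2epsProb, h, h.not_gt, h.ne']

theorem po2epsProb_add_swap (ε : ℝ) (qi qj : ℕ) {i j : ℕ} (hij : i ≠ j) :
    po2epsProb ε qi qj i j + po2epsProb ε qj qi j i = 1 := by
  rcases lt_trichotomy qi qj with h | rfl | h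
  · rw [po2epsProb_of_lt ε h, po2epsProb_of_gt ε h]; ring
  · rcases hij.lt_or_gt with h | h <;> simp [po2epsProb, h, h.not_gt]
  · rw [po2epsProb_of_gt ε h, po2epsProb_of_lt ε h]; ring

theorem one_sub_mul_add_mul_le_add_mul_max_half (ε : ℝ) {a b : ℝ} (ha : 0 ≤ a) (hab : a ≤ b) :
    (1 - ε) * a + ε * b ≤ (a + b) * max (1 / 2) ε := by
  rcases le_total ε (1 / 2) with hε | hε
  · rw [max_eq_left hε]; nlinarith
  · rw [max_eq_right hε]; nlinarith

theorem po2eps_weighted_bound_of_lt (ε : ℝ) {qi qj : ℕ} (h : qi < qj) (i j : ℕ) :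
    (qi : ℝ) * po2epsProb ε qi qj i j + (qj : ℝ) * po2epsProb ε qj qi j i
      ≤ ((qi : ℝ) + (qj : ℝ)) * max (1/2) ε := by
  rw [po2epsProb_of_lt ε h, po2epsProb_of_gt ε h, mul_comm _ (1 - ε), mul_comm _ ε]
  exact one_sub_mul_add_mul_le_add_mul_max_half ε (Nat.cast_nonneg qi) (by exact_mod_cast h.le)

theorem po2eps_weighted_bound_general (ε : ℝ)
    (qi qj i j : ℕ) (hij : i ≠ j) :
    (qi : ℝ) * po2epsProb ε qi qj i j + (qj : ℝ) * po2epsProb ε qj qi j i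
      ≤ ((qi : ℝ) + (qj : ℝ)) * max (1/2) ε := by
  rcases lt_trichotomy qi qj with h | rfl | h
  · exact po2eps_weighted_bound_of_lt ε h i j
  · calc (qi : ℝ) * po2epsProb ε qi qi i j + qi * po2epsProb ε qi qi j i
        = qi := by rw [← mul_add, po2epsProb_add_swap ε qi qi hij, mul_one]
      _ = (qi + qi) * (1 / 2) := by ring
      _ ≤ (qi + qi) * max (1 / 2) ε := by gcongr; exact le_max_left _ _
  · rw [add_comm, add_comm (qi : ℝ)]
    exact po2eps_weighted_bound_of_lt ε h j i

theorem po2eps_weighted_bound (ε : ℝ) (hε0 : 0 ≤ ε) (hε1 : ε ≤ 1)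
    (qi qj i j : ℕ) (hij : i ≠ j) :
    (qi : ℝ) * po2epsProb ε qi qj i j + (qj : ℝ) * po2epsProb ε qj qi j i
      ≤ ((qi : ℝ) + (qj : ℝ)) * max (1/2) ε :=
  po2eps_weighted_bound_general ε qi qj i j hij
end

section
/- Let S = {s : ℕ → ℝ : s_0 = 1, 1 ≥ s_i ≥ s_{i+1} ≥ 0 for all i ≥ 1, and Σ_{i≥1} s_i < ∞} with the ℓ¹ norm. For λ > 0, ε ∈ [0,1], g ≥ 0, define G_i(s) = λ·p_{i−1}(s) − (s_i − s_{i+1}), where p_{i−1}(s) = (s_{i−1} − s_i)[2ε(s_{i+g} + s_{i−1−g}) + (1−2ε)(s_i + s_{i−1})] (with s_j = 1 for j ≤ 0). Then G : S → ℝ^∞ is Lipschitz in ℓ¹ with Lipschitz constant λ(16ε + 4) + 2, i.e., Σ_{i≥1} |G_i(x) − G_i(y)| ≤ (λ(16ε+4)+2)·Σ_{i≥1} |x_i − y_i| for all x, y ∈ S. -/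
/-- Arrival probability under the Po2-(g,ε) scheme in the mean-field limit. -/
noncomputable def po2geArr (ε : ℝ) (g : ℕ) (s : ℤ → ℝ) (i : ℤ) : ℝ :=
  (s (i - 1) - s i) *
    (2 * ε * (s (i + g) + s (i - 1 - g)) + (1 - 2 * ε) * (s i + s (i - 1)))

/-- Drift function of the Po2-(g,ε) mean-field. -/
noncomputable def po2geDrift (lam ε : ℝ) (g : ℕ) (s : ℤ → ℝ) (i : ℤ) : ℝ :=
  lam * po2geArr ε g s i - (s i - s (i + 1))

/-!
Each drift coordinate `G_i` is a polynomial in the five coordinates `s_{i-1-g}, s_{i-1}, s_i,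
s_{i+1}, s_{i+g}`, all in `[0, 1]`, so `|G_i(x) - G_i(y)|` is at most a weighted sum of shifted
differences `|x_j - y_j|`. These differences vanish for `j ≤ 0`, so summing over `i ∈ ℤ` each shift
contributes exactly the `ℓ¹` distance. The weights add up to `λ (12 ε + 4 |1 - 2ε|) + 2`, which is
at most `λ (16 ε + 4) + 2` because `|1 - 2ε| ≤ 1 + ε` for `0 ≤ ε ≤ 1`.
-/

theorem abs_sub_mul_add_sub_sub_mul_add_le {p q s t p' q' s' t' : ℝ}
    (hs : |s| ≤ 1) (ht : |t| ≤ 1) (hpq' : |p' - q'| ≤ 1) :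
    |(p - q) * (s + t) - (p' - q') * (s' + t')|
      ≤ 2 * (|p - p'| + |q - q'|) + (|s - s'| + |t - t'|) := by
  have hst : |s + t| ≤ 2 := (abs_add_le s t).trans (by linarith)
  calc |(p - q) * (s + t) - (p' - q') * (s' + t')|
      = |((p - p') - (q - q')) * (s + t) + (p' - q') * ((s - s') + (t - t'))| := by ring_nf
    _ ≤ |(p - p') - (q - q')| * |s + t| + |p' - q'| * |(s - s') + (t - t')| := by
      rw [← abs_mul, ← abs_mul]; exact abs_add_le _ _
    _ ≤ (|p - p'| + |q - q'|) * 2 + 1 * (|s - s'| + |t - t'|) := by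
      gcongr
      exacts [abs_sub _ _, abs_add_le _ _]
    _ = 2 * (|p - p'| + |q - q'|) + (|s - s'| + |t - t'|) := by ring

theorem abs_sq_sub_sq_le_two_mul_abs_sub {a b : ℝ} (ha : |a| ≤ 1) (hb : |b| ≤ 1) :
    |a ^ 2 - b ^ 2| ≤ 2 * |a - b| := by
  rw [sq_sub_sq, abs_mul]
  gcongr
  exact (abs_add_le a b).trans (by linarith)

theorem abs_sq_sub_sq_sub_sq_sub_sq_le {p q p' q' : ℝ} (hp : |p| ≤ 1) (hq : |q| ≤ 1)
    (hp' : |p'| ≤ 1) (hq' : |q'| ≤ 1) :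
    |(p ^ 2 - q ^ 2) - (p' ^ 2 - q' ^ 2)| ≤ 2 * (|p - p'| + |q - q'|) := by
  calc |(p ^ 2 - q ^ 2) - (p' ^ 2 - q' ^ 2)| = |(p ^ 2 - p' ^ 2) - (q ^ 2 - q' ^ 2)| := by
        ring_nf
    _ ≤ |p ^ 2 - p' ^ 2| + |q ^ 2 - q' ^ 2| := abs_sub _ _
    _ ≤ 2 * |p - p'| + 2 * |q - q'| := by
      gcongr <;> exact abs_sq_sub_sq_le_two_mul_abs_sub ‹_› ‹_›
    _ = 2 * (|p - p'| + |q - q'|) := by ring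

theorem natCast_add_one_injective : Function.Injective (fun n : ℕ => (n : ℤ) + 1) :=
  (add_left_injective 1).comp Nat.cast_injective

theorem hasSum_int_of_hasSum_nat_add_one {M : Type*} [AddCommMonoid M] [TopologicalSpace M]
    {f : ℤ → M} {a : M} (hf : ∀ i ≤ 0, f i = 0) (h : HasSum (fun n : ℕ => f (n + 1)) a) :
    HasSum f a := by
  refine (natCast_add_one_injective.hasSum_iff fun i hi => hf i ?_).mp h
  by_contra! hpos
  exact hi ⟨(i - 1).toNat, by simp only; omega⟩

theorem tsum_nat_add_one_le_of_hasSum {f g : ℤ → ℝ} {a : ℝ} (hf : ∀ i, 0 ≤ f i)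
    (hfg : ∀ i, f i ≤ g i) (hg : HasSum g a) : ∑' n : ℕ, f (n + 1) ≤ a :=
  hg.tsum_eq ▸ Summable.tsum_le_tsum_of_inj _ natCast_add_one_injective
    (fun i _ => (hf i).trans (hfg i)) (fun _ => hfg _)
    (.of_nonneg_of_le (fun _ => hf _) (fun _ => hfg _)
      (hg.summable.comp_injective natCast_add_one_injective)) hg.summable

/-- The `(1 - 2ε)` part is a difference of squares, which is what keeps its Lipschitz weight
at `2` per coordinate. -/
theorem po2geArr_eq (ε : ℝ) (g : ℕ) (s : ℤ → ℝ) (i : ℤ) :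
    po2geArr ε g s i = 2 * ε * ((s (i - 1) - s i) * (s (i + g) + s (i - 1 - g)))
      + (1 - 2 * ε) * (s (i - 1) ^ 2 - s i ^ 2) := by
  unfold po2geArr; ring

section Lipschitz

variable {ε : ℝ} {x y : ℤ → ℝ}

theorem abs_po2geArr_sub_le (hε : 0 ≤ ε) (hx : ∀ i, x i ∈ Set.Icc (0 : ℝ) 1)
    (hy : ∀ i, y i ∈ Set.Icc (0 : ℝ) 1) (g : ℕ) (i : ℤ) :
    |po2geArr ε g x i - po2geArr ε g y i|
      ≤ 2 * ε * (2 * (|x (i - 1) - y (i - 1)| + |x i - y i|)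
          + (|x (i + g) - y (i + g)| + |x (i - 1 - g) - y (i - 1 - g)|))
        + |1 - 2 * ε| * (2 * (|x (i - 1) - y (i - 1)| + |x i - y i|)) := by
  have hx1 (j : ℤ) : |x j| ≤ 1 := abs_le.mpr ⟨by linarith [(hx j).1], (hx j).2⟩
  have hy1 (j : ℤ) : |y j| ≤ 1 := abs_le.mpr ⟨by linarith [(hy j).1], (hy j).2⟩
  rw [po2geArr_eq, po2geArr_eq]
  calc _ = |2 * ε * ((x (i - 1) - x i) * (x (i + g) + x (i - 1 - g))
              - (y (i - 1) - y i) * (y (i + g) + y (i - 1 - g)))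
            + (1 - 2 * ε) * ((x (i - 1) ^ 2 - x i ^ 2) - (y (i - 1) ^ 2 - y i ^ 2))| := by
        ring_nf
    _ ≤ 2 * ε * |(x (i - 1) - x i) * (x (i + g) + x (i - 1 - g))
              - (y (i - 1) - y i) * (y (i + g) + y (i - 1 - g))|
          + |1 - 2 * ε| * |(x (i - 1) ^ 2 - x i ^ 2) - (y (i - 1) ^ 2 - y i ^ 2)| := by
        refine (abs_add_le _ _).trans_eq ?_
        rw [abs_mul (2 * ε), abs_mul (1 - 2 * ε), abs_of_nonneg (by positivity : (0 : ℝ) ≤ 2 * ε)]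
    _ ≤ _ := by
        gcongr
        · exact abs_sub_mul_add_sub_sub_mul_add_le (hx1 _) (hx1 _)
            (abs_sub_le_of_nonneg_of_le (hy _).1 (hy _).2 (hy _).1 (hy _).2)
        · exact abs_sq_sub_sq_sub_sq_sub_sq_le (hx1 _) (hx1 _) (hy1 _) (hy1 _)

theorem abs_po2geDrift_sub_le {lam : ℝ} (hlam : 0 ≤ lam) (hε : 0 ≤ ε)
    (hx : ∀ i, x i ∈ Set.Icc (0 : ℝ) 1) (hy : ∀ i, y i ∈ Set.Icc (0 : ℝ) 1) (g : ℕ) (i : ℤ) :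
    |po2geDrift lam ε g x i - po2geDrift lam ε g y i|
      ≤ lam * (2 * ε * (2 * (|x (i - 1) - y (i - 1)| + |x i - y i|)
          + (|x (i + g) - y (i + g)| + |x (i - 1 - g) - y (i - 1 - g)|))
        + |1 - 2 * ε| * (2 * (|x (i - 1) - y (i - 1)| + |x i - y i|)))
        + (|x i - y i| + |x (i + 1) - y (i + 1)|) := by
  calc _ = |lam * (po2geArr ε g x i - po2geArr ε g y i)
            - ((x i - y i) - (x (i + 1) - y (i + 1)))| := by
        unfold po2geDrift; ring_nf
    _ ≤ lam * |po2geArr ε g x i - po2geArr ε g y i|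
          + |(x i - y i) - (x (i + 1) - y (i + 1))| := by
        rw [← abs_of_nonneg hlam, ← abs_mul, abs_of_nonneg hlam]
        exact abs_sub _ _
    _ ≤ _ := by
        gcongr
        exacts [abs_po2geArr_sub_le hε hx hy g i, abs_sub _ _]

end Lipschitz

theorem po2geDrift_lipschitz_general (lam ε : ℝ) (hlam : 0 < lam)
    (hε0 : 0 ≤ ε) (hε1 : ε ≤ 1) (g : ℕ)
    (x y : ℤ → ℝ)
    (hxbd : ∀ i : ℤ, 0 ≤ x i ∧ x i ≤ 1) (hybd : ∀ i : ℤ, 0 ≤ y i ∧ y i ≤ 1)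
    (hxone : ∀ i : ℤ, i ≤ 0 → x i = 1) (hyone : ∀ i : ℤ, i ≤ 0 → y i = 1)
    (hxsum : Summable (fun n : ℕ => x (n + 1)))
    (hysum : Summable (fun n : ℕ => y (n + 1))) :
    ∑' n : ℕ, |po2geDrift lam ε g x (n + 1) - po2geDrift lam ε g y (n + 1)|
      ≤ (lam * (16 * ε + 4) + 2) * ∑' n : ℕ, |x (n + 1) - y (n + 1)| := by
  set d : ℤ → ℝ := fun i => |x i - y i|
  set D := ∑' n : ℕ, d (n + 1)
  have hd : HasSum d D := hasSum_int_of_hasSum_nat_add_one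
    (fun i hi => by simp [d, hxone i hi, hyone i hi]) (hxsum.sub hysum).abs.hasSum
  have hadd {f : ℤ → ℝ} (hf : HasSum f D) (c : ℤ) : HasSum (fun i => f (i + c)) D :=
    (Equiv.addRight c).hasSum_iff.mpr hf
  have hsub {f : ℤ → ℝ} (hf : HasSum f D) (c : ℤ) : HasSum (fun i => f (i - c)) D :=
    (Equiv.subRight c).hasSum_iff.mpr hf
  -- The bound of `abs_po2geDrift_sub_le`, summed over `ℤ`: each shifted copy of `d` sums to `D`.
  have hnear := (hsub hd 1).add hd
  have hfar := (hadd hd g).add (hsub (hsub hd g) 1)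
  have hb := ((((hnear.mul_left 2).add hfar).mul_left (2 * ε)).add
    ((hnear.mul_left 2).mul_left |1 - 2 * ε|)).mul_left lam |>.add (hd.add (hadd hd 1))
  have hbound := abs_po2geDrift_sub_le hlam.le hε0 hxbd hybd g
  have hE : |1 - 2 * ε| ≤ 1 + ε := abs_le.mpr ⟨by linarith, by linarith⟩
  calc _ ≤ _ := tsum_nat_add_one_le_of_hasSum (fun _ => abs_nonneg _) hbound hb
    _ = (lam * (12 * ε + 4 * |1 - 2 * ε|) + 2) * D := by ring
    _ ≤ _ := by
      have : 0 ≤ D := hd.nonneg fun i => abs_nonneg _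
      gcongr (lam * ?_ + 2) * D
      linarith

theorem po2geDrift_lipschitz (lam ε : ℝ) (hlam : 0 < lam)
    (hε0 : 0 ≤ ε) (hε1 : ε ≤ 1) (g : ℕ)
    (x y : ℤ → ℝ)
    (hxmono : ∀ i j : ℤ, i ≤ j → x j ≤ x i)
    (hymono : ∀ i j : ℤ, i ≤ j → y j ≤ y i)
    (hxbd : ∀ i : ℤ, 0 ≤ x i ∧ x i ≤ 1) (hybd : ∀ i : ℤ, 0 ≤ y i ∧ y i ≤ 1)
    (hxone : ∀ i : ℤ, i ≤ 0 → x i = 1) (hyone : ∀ i : ℤ, i ≤ 0 → y i = 1)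
    (hxsum : Summable (fun n : ℕ => x (n + 1)))
    (hysum : Summable (fun n : ℕ => y (n + 1))) :
    ∑' n : ℕ, |po2geDrift lam ε g x (n + 1) - po2geDrift lam ε g y (n + 1)|
      ≤ (lam * (16 * ε + 4) + 2) * ∑' n : ℕ, |x (n + 1) - y (n + 1)| :=
  po2geDrift_lipschitz_general lam ε hlam hε0 hε1 g x y hxbd hybd hxone hyone hxsum hysum
end

section
/- Let S be the set of sequences x : ℕ → ℝ with x_0 = 1, 1 ≥ x_i ≥ x_{i+1} ≥ 0 for all i ≥ 1, and Σ_{i≥1} x_i < ∞, equipped with the ℓ¹ norm. For λ > 0 and ε ∈ [0,1], define F_i(x) = λ·[(1−ε)(x_{i−1}² − x_i²) + ε((1−x_i)² − (1−x_{i−1})²)] − (x_i − x_{i+1}). Then F is Lipschitz with constant 4λ + 2 under the ℓ¹ norm. -/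
/-!
Writing `h(t) = (1 - ε) t² - ε (1 - t)²`, the drift is
`F_{i+1}(s) = λ (h(s_i) - h(s_{i+1})) - (s_{i+1} - s_{i+2})`.
On `[0, 1]` the difference quotient of `h` is a convex combination of `a + b` and
`2 - a - b`, so `h` is `2`-Lipschitz there. Hence `|F_{i+1}(x) - F_{i+1}(y)|` is at most
`2λ (d_i + d_{i+1}) + d_{i+1} + d_{i+2}` with `d_i = |x_i - y_i|`, and summing, using
`d_0 = 0`, every shifted series is at most `∑ d_{i+1}`.
-/

/-- Drift function of the Po2-ε mean-field. -/
noncomputable def po2epsDrift (lam ε : ℝ) (s : ℕ → ℝ) (i : ℕ) : ℝ :=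
  lam * ((1 - ε) * ((s (i - 1))^2 - (s i)^2)
          + ε * ((1 - s i)^2 - (1 - s (i - 1))^2))
    - (s i - s (i + 1))

def po2epsPotential (ε t : ℝ) : ℝ :=
  (1 - ε) * t ^ 2 - ε * (1 - t) ^ 2

lemma po2epsDrift_succ (lam ε : ℝ) (s : ℕ → ℝ) (i : ℕ) :
    po2epsDrift lam ε s (i + 1) =
      lam * (po2epsPotential ε (s i) - po2epsPotential ε (s (i + 1)))
        - (s (i + 1) - s (i + 2)) := by
  simp only [po2epsDrift, po2epsPotential, Nat.add_sub_cancel]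
  ring

lemma abs_po2epsPotential_sub_le {ε a b : ℝ} (hε0 : 0 ≤ ε) (hε1 : ε ≤ 1)
    (ha : a ∈ Set.Icc (0 : ℝ) 1) (hb : b ∈ Set.Icc (0 : ℝ) 1) :
    |po2epsPotential ε a - po2epsPotential ε b| ≤ 2 * |a - b| := by
  obtain ⟨ha0, ha1⟩ := ha
  obtain ⟨hb0, hb1⟩ := hb
  have hslope : po2epsPotential ε a - po2epsPotential ε b
      = ((1 - ε) * (a + b) + ε * (2 - a - b)) * (a - b) := by
    simp only [po2epsPotential]
    ring
  have hmid : |(1 - ε) * (a + b) + ε * (2 - a - b)| ≤ 2 :=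
    abs_le.2 ⟨by nlinarith, by nlinarith⟩
  rw [hslope, abs_mul]
  exact mul_le_mul_of_nonneg_right hmid (abs_nonneg _)

lemma abs_po2epsDrift_succ_sub_le {lam ε : ℝ} (hlam : 0 ≤ lam) (hε0 : 0 ≤ ε) (hε1 : ε ≤ 1)
    {x y : ℕ → ℝ} (hx : ∀ i, x i ∈ Set.Icc (0 : ℝ) 1) (hy : ∀ i, y i ∈ Set.Icc (0 : ℝ) 1)
    (n : ℕ) :
    |po2epsDrift lam ε x (n + 1) - po2epsDrift lam ε y (n + 1)|
      ≤ 2 * lam * (|x n - y n| + |x (n + 1) - y (n + 1)|)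
        + (|x (n + 1) - y (n + 1)| + |x (n + 2) - y (n + 2)|) := by
  have hn := abs_po2epsPotential_sub_le hε0 hε1 (hx n) (hy n)
  have hn1 := abs_po2epsPotential_sub_le hε0 hε1 (hx (n + 1)) (hy (n + 1))
  rw [po2epsDrift_succ, po2epsDrift_succ]
  set h := po2epsPotential ε
  calc _ = |lam * ((h (x n) - h (y n)) - (h (x (n + 1)) - h (y (n + 1))))
          - ((x (n + 1) - y (n + 1)) - (x (n + 2) - y (n + 2)))| := by ring_nf
    _ ≤ lam * (|h (x n) - h (y n)| + |h (x (n + 1)) - h (y (n + 1))|)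
          + (|x (n + 1) - y (n + 1)| + |x (n + 2) - y (n + 2)|) := by
        refine (abs_sub _ _).trans (add_le_add ?_ (abs_sub _ _))
        rw [abs_mul, abs_of_nonneg hlam]
        exact mul_le_mul_of_nonneg_left (abs_sub _ _) hlam
    _ ≤ _ := by nlinarith

lemma tsum_shift_le_tsum_succ {d : ℕ → ℝ} (hd : Summable d) (hnn : ∀ n, 0 ≤ d n) (h0 : d 0 = 0)
    (k : ℕ) : ∑' n, d (n + k) ≤ ∑' n, d (n + 1) := by
  rw [← zero_add (∑' n, d (n + 1)), ← h0, ← hd.tsum_eq_zero_add]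
  exact tsum_comp_le_tsum_of_inj hd hnn (add_left_injective k)

theorem po2epsDrift_lipschitz_general (lam ε : ℝ) (hlam : 0 < lam)
    (hε0 : 0 ≤ ε) (hε1 : ε ≤ 1)
    (x y : ℕ → ℝ)
    (hx0 : x 0 = 1) (hy0 : y 0 = 1)
    (hxbd : ∀ i : ℕ, 0 ≤ x i ∧ x i ≤ 1) (hybd : ∀ i : ℕ, 0 ≤ y i ∧ y i ≤ 1)
    (hxsum : Summable (fun n : ℕ => x (n + 1)))
    (hysum : Summable (fun n : ℕ => y (n + 1))) :
    ∑' n : ℕ, |po2epsDrift lam ε x (n + 1) - po2epsDrift lam ε y (n + 1)|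
      ≤ (4 * lam + 2) * ∑' n : ℕ, |x (n + 1) - y (n + 1)| := by
  set d : ℕ → ℝ := fun i => |x i - y i|
  have hdnn : ∀ n, 0 ≤ d n := fun n => abs_nonneg _
  have hd0 : d 0 = 0 := by simp [d, hx0, hy0]
  have hd : Summable d := (summable_nat_add_iff 1).mp (hxsum.sub hysum).abs
  have hshift (k : ℕ) : Summable (fun n => d (n + k)) := (summable_nat_add_iff k).mpr hd
  have hbound := abs_po2epsDrift_succ_sub_le hlam.le hε0 hε1 hxbd hybd
  have hmajorant := ((hd.add (hshift 1)).mul_left (2 * lam)).add ((hshift 1).add (hshift 2))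
  calc _ ≤ ∑' n, (2 * lam * (d n + d (n + 1)) + (d (n + 1) + d (n + 2))) :=
        (hmajorant.of_nonneg_of_le (fun _ => abs_nonneg _) hbound).tsum_le_tsum hbound hmajorant
    _ = 2 * lam * (∑' n, d (n + 0) + ∑' n, d (n + 1)) + (∑' n, d (n + 1) + ∑' n, d (n + 2)) := by
        rw [((hd.add (hshift 1)).mul_left _).tsum_add ((hshift 1).add (hshift 2)),
          tsum_mul_left, hd.tsum_add (hshift 1), (hshift 1).tsum_add (hshift 2)]
        rfl
    _ ≤ (4 * lam + 2) * ∑' n, d (n + 1) := by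
        have h0 := tsum_shift_le_tsum_succ hd hdnn hd0 0
        have h2 := tsum_shift_le_tsum_succ hd hdnn hd0 2
        nlinarith

theorem po2epsDrift_lipschitz (lam ε : ℝ) (hlam : 0 < lam)
    (hε0 : 0 ≤ ε) (hε1 : ε ≤ 1)
    (x y : ℕ → ℝ)
    (hx0 : x 0 = 1) (hy0 : y 0 = 1)
    (hxmono : ∀ i : ℕ, x (i + 1) ≤ x i) (hymono : ∀ i : ℕ, y (i + 1) ≤ y i)
    (hxbd : ∀ i : ℕ, 0 ≤ x i ∧ x i ≤ 1) (hybd : ∀ i : ℕ, 0 ≤ y i ∧ y i ≤ 1)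
    (hxsum : Summable (fun n : ℕ => x (n + 1)))
    (hysum : Summable (fun n : ℕ => y (n + 1))) :
    ∑' n : ℕ, |po2epsDrift lam ε x (n + 1) - po2epsDrift lam ε y (n + 1)|
      ≤ (4 * lam + 2) * ∑' n : ℕ, |x (n + 1) - y (n + 1)| :=
  po2epsDrift_lipschitz_general lam ε hlam hε0 hε1 x y hx0 hy0 hxbd hybd hxsum hysum
end

section
/- Let 0 < λ < 1 and g ≥ 0 be an integer. Define z* : ℤ → ℝ by z*_i = 1 for i ≤ 0 and z*_i = λ·(z*_{i−1−g})² for i ≥ 1. Then z* is nonincreasing, takes values in [0,1], and Σ_{i≥1} z*_i = (g+1)·Σ_{i≥1} λ^{2^i − 1} < ∞. -/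
/-!
Write `i` as lying in the `k`-th block `{k(g+1)+1, …, (k+1)(g+1)}` of `g+1` consecutive integers
(nonpositive `i` forming block `0`). The recursion maps block `k` bijectively onto block `k-1`,
so by induction `z*` is constant on each block, with value `λ^(2^k - 1)` on block `k`, because
`λ · (λ^(2^k - 1))² = λ^(2^(k+1) - 1)`. Everything follows from this closed form: each value of
the series `∑ λ^(2^k - 1)` is repeated `g+1` times.
-/

open Finset

/-- `⌈max i 0 / (g+1)⌉`: the `k` such that `i` lies in the `k`-th block of length `g+1`. -/
def blockIndex (g : ℕ) (i : ℤ) : ℕ := (i.toNat + g) / (g + 1)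

lemma blockIndex_of_nonpos {g : ℕ} {i : ℤ} (hi : i ≤ 0) : blockIndex g i = 0 := by
  rw [blockIndex, Int.toNat_of_nonpos hi, zero_add]
  exact Nat.div_eq_of_lt (Nat.lt_succ_self g)

lemma blockIndex_natCast_add_one (g n : ℕ) : blockIndex g (n + 1) = n / (g + 1) + 1 := by
  rw [blockIndex, show ((n : ℤ) + 1).toNat + g = n + (g + 1) by omega,
    Nat.add_div_right _ g.succ_pos]

lemma blockIndex_sub_add_one {g : ℕ} {i : ℤ} (hi : 1 ≤ i) :
    blockIndex g (i - 1 - g) + 1 = blockIndex g i := by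
  obtain ⟨n, rfl⟩ : ∃ n : ℕ, i = n + 1 := ⟨(i - 1).toNat, by omega⟩
  rw [blockIndex_natCast_add_one, blockIndex]
  rcases le_or_gt g n with hgn | hng
  · rw [show ((n : ℤ) + 1 - 1 - g).toNat + g = n by omega]
  · rw [show ((n : ℤ) + 1 - 1 - g).toNat + g = g by omega,
      Nat.div_eq_of_lt (Nat.lt_succ_self g), Nat.div_eq_of_lt (Nat.lt_succ_of_lt hng)]

lemma blockIndex_mono (g : ℕ) : Monotone (blockIndex g) :=
  fun _ _ hij => Nat.div_le_div_right (Nat.add_le_add_right (Int.toNat_le_toNat hij) g)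

lemma pow_two_pow_succ_sub_one {M : Type*} [Monoid M] (c : M) (k : ℕ) :
    c ^ (2 ^ (k + 1) - 1) = c * (c ^ (2 ^ k - 1)) ^ 2 := by
  rw [← pow_mul, ← pow_succ']
  congr 1
  have := Nat.one_le_two_pow (n := k)
  rw [pow_succ]
  omega

theorem eq_pow_blockIndex_of_recursion {M : Type*} [Monoid M] {c : M} {g : ℕ} {z : ℤ → M}
    (hz0 : ∀ i ≤ 0, z i = 1) (hzrec : ∀ i, 1 ≤ i → z i = c * z (i - 1 - g) ^ 2) (i : ℤ) :
    z i = c ^ (2 ^ blockIndex g i - 1) := by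
  induction i using Int.strongRec (m := 1) with
  | lt i hi => rw [hz0 i (by omega), blockIndex_of_nonpos (by omega)]; simp
  | ge i hi ih =>
    rw [hzrec i hi, ih (i - 1 - g) (by omega), ← blockIndex_sub_add_one hi,
      pow_two_pow_succ_sub_one]

theorem HasSum.comp_fst {α β γ : Type*} [AddCommMonoid α] [TopologicalSpace α]
    [ContinuousAdd α] [Fintype γ] {f : β → α} {a : α} (hf : HasSum f a) :
    HasSum (fun p : β × γ => f p.1) (Fintype.card γ • a) := by
  classical
  have hslice (c : γ) : HasSum (fun p : β × γ => if p.2 = c then f p.1 else 0) a := by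
    rw [← (Prod.mk_left_injective c).hasSum_iff]
    · simpa [Function.comp_def] using hf
    · rintro ⟨b, c'⟩ hbc
      simp only [ite_eq_right_iff]
      rintro rfl
      exact absurd ⟨b, rfl⟩ hbc
  simpa [Finset.sum_ite_eq] using hasSum_sum fun c (_ : c ∈ univ) => hslice c

theorem HasSum.comp_nat_div {α : Type*} [AddCommMonoid α] [TopologicalSpace α]
    [ContinuousAdd α] {f : ℕ → α} {a : α} (hf : HasSum f a) (m : ℕ) [NeZero m] :
    HasSum (fun n => f (n / m)) (m • a) := by
  simpa [Function.comp_def, Nat.divModEquiv] using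
    (Nat.divModEquiv m).hasSum_iff.mpr (hf.comp_fst (γ := Fin m))

lemma summable_pow_two_pow_succ_sub_one {r : ℝ} (hr0 : 0 ≤ r) (hr1 : r < 1) :
    Summable fun n : ℕ => r ^ (2 ^ (n + 1) - 1) := by
  refine (summable_geometric_of_lt_one hr0 hr1).of_nonneg_of_le (fun n => pow_nonneg hr0 _)
    fun n => pow_le_pow_of_le_one hr0 hr1.le ?_
  have := Nat.lt_two_pow_self (n := n + 1)
  omega

theorem po2ge_dominating_sequence (lam : ℝ) (hlam0 : 0 < lam) (hlam1 : lam < 1)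
    (g : ℕ) (z : ℤ → ℝ)
    (hz0 : ∀ i : ℤ, i ≤ 0 → z i = 1)
    (hzrec : ∀ i : ℤ, 1 ≤ i → z i = lam * (z (i - 1 - g))^2) :
    (∀ i j : ℤ, i ≤ j → z j ≤ z i) ∧
    (∀ i : ℤ, 0 ≤ z i ∧ z i ≤ 1) ∧
    Summable (fun n : ℕ => z (n + 1)) ∧
    Summable (fun n : ℕ => lam ^ (2 ^ (n + 1) - 1)) ∧
    ∑' n : ℕ, z (n + 1) = ((g : ℝ) + 1) * ∑' n : ℕ, lam ^ (2 ^ (n + 1) - 1) := by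
  have hz := eq_pow_blockIndex_of_recursion hz0 hzrec
  have hseries := (summable_pow_two_pow_succ_sub_one hlam0.le hlam1).hasSum
  have hz_series :
      HasSum (fun n : ℕ => z (n + 1)) ((g + 1) • ∑' n : ℕ, lam ^ (2 ^ (n + 1) - 1)) := by
    simpa [hz, blockIndex_natCast_add_one] using hseries.comp_nat_div (g + 1)
  refine ⟨fun i j hij => ?_, fun i => ?_, hz_series.summable, hseries.summable, ?_⟩
  · rw [hz, hz]
    exact pow_le_pow_of_le_one hlam0.le hlam1.le
      (Nat.sub_le_sub_right (Nat.pow_le_pow_right two_pos (blockIndex_mono g hij)) 1)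
  · rw [hz]
    exact ⟨pow_nonneg hlam0.le _, pow_le_one₀ hlam0.le hlam1.le⟩
  · rw [hz_series.tsum_eq, nsmul_eq_mul]
    push_cast
    rfl
end

section
/- For any 0 < λ < 1, the series Σ_{i≥1} λ^{2^i − 1} converges, and moreover limsup_{λ→1⁻} [Σ_{i≥1} λ^{2^i−1}] / log(1/(1−λ)) ≤ 1/log 2. -/
/-!
Each of the first `N` terms is at most `1`. Beyond them, `2 ^ (N + k + 1) - 1 ≥ 2 ^ N * (k + 1)`
bounds the terms by the geometric series of ratio `q = λ ^ 2 ^ N`, whose sum `q / (1 - q)` is at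
most `1` as soon as `q ≤ 1 / 2`. Since `λ ≤ exp (λ - 1)`, this holds once `2 ^ N ≥ 1 / (1 - λ)`,
so `N = ⌈log₂ (1 / (1 - λ))⌉` gives a sum of at most `log₂ (1 / (1 - λ)) + 2`.
-/

open Filter Real Topology

lemma summable_pow_two_pow_sub_one {x : ℝ} (hx₀ : 0 ≤ x) (hx₁ : x < 1) :
    Summable (fun n : ℕ => x ^ (2 ^ (n + 1) - 1)) :=
  (summable_geometric_of_lt_one hx₀ hx₁).of_nonneg_of_le (fun _ => pow_nonneg hx₀ _)
    fun n => pow_le_pow_of_le_one hx₀ hx₁.le (by have := (n + 1).lt_two_pow_self; omega)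

lemma two_pow_mul_succ_le_two_pow_add_succ_sub_one (N k : ℕ) :
    2 ^ N * (k + 1) ≤ 2 ^ (k + N + 1) - 1 := by
  have hk : 2 ^ N * (k + 1) < 2 ^ N * 2 ^ (k + 1) :=
    Nat.mul_lt_mul_of_pos_left (k + 1).lt_two_pow_self (Nat.two_pow_pos N)
  rw [← pow_add, show N + (k + 1) = k + N + 1 by ring] at hk
  omega

lemma tsum_pow_two_pow_sub_one_le_of_pow_le_half {x : ℝ} (hx₀ : 0 ≤ x) (hx₁ : x < 1) {N : ℕ}
    (hN : x ^ 2 ^ N ≤ 1 / 2) :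
    ∑' n : ℕ, x ^ (2 ^ (n + 1) - 1) ≤ N + 1 := by
  set q := x ^ 2 ^ N
  have hq₀ : 0 ≤ q := pow_nonneg hx₀ _
  have hsum := summable_pow_two_pow_sub_one hx₀ hx₁
  have head : ∑ n ∈ Finset.range N, x ^ (2 ^ (n + 1) - 1) ≤ N := by
    simpa using Finset.sum_le_card_nsmul (Finset.range N) _ 1 fun n _ => pow_le_one₀ hx₀ hx₁.le
  have tail : ∑' k : ℕ, x ^ (2 ^ (k + N + 1) - 1) ≤ 1 :=
    calc ∑' k : ℕ, x ^ (2 ^ (k + N + 1) - 1)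
        ≤ ∑' k : ℕ, q * q ^ k := by
          refine (summable_nat_add_iff N).mpr hsum |>.tsum_le_tsum (fun k => ?_)
            ((summable_geometric_of_lt_one hq₀ (by linarith)).mul_left q)
          rw [← pow_succ', ← pow_mul]
          exact pow_le_pow_of_le_one hx₀ hx₁.le (two_pow_mul_succ_le_two_pow_add_succ_sub_one N k)
      _ = q / (1 - q) := by
          rw [tsum_mul_left, tsum_geometric_of_lt_one hq₀ (by linarith), div_eq_mul_inv]
      _ ≤ 1 := by rw [div_le_one (by linarith)]; linarith
  rw [← hsum.sum_add_tsum_nat_add N]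
  exact add_le_add head tail

lemma pow_le_half_of_one_le_mul_one_sub {x : ℝ} (hx : 0 ≤ x) {m : ℕ} (hm : 1 ≤ m * (1 - x)) :
    x ^ m ≤ 1 / 2 :=
  calc x ^ m ≤ exp (x - 1) ^ m := pow_le_pow_left₀ hx (by linarith [add_one_le_exp (x - 1)]) m
    _ = exp (-(m * (1 - x))) := by rw [← exp_nat_mul]; ring_nf
    _ ≤ exp (-1) := exp_le_exp.mpr (by linarith)
    _ ≤ 1 / 2 := by
      rw [exp_neg, one_div]
      exact inv_anti₀ two_pos (by linarith [add_one_le_exp 1])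

lemma tsum_pow_two_pow_sub_one_le_logb {x : ℝ} (hx₀ : 0 ≤ x) (hx₁ : x < 1) :
    ∑' n : ℕ, x ^ (2 ^ (n + 1) - 1) ≤ logb 2 (1 / (1 - x)) + 2 := by
  have hpos : 0 < 1 - x := by linarith
  have hlogb : 0 ≤ logb 2 (1 / (1 - x)) :=
    logb_nonneg one_lt_two (by rw [le_div_iff₀ hpos]; linarith)
  set N := ⌈logb 2 (1 / (1 - x))⌉₊
  have hN : 1 / (1 - x) ≤ 2 ^ N := by
    rw [← rpow_natCast, ← logb_le_iff_le_rpow one_lt_two (by positivity)]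
    exact Nat.le_ceil _
  have hq : x ^ 2 ^ N ≤ 1 / 2 :=
    pow_le_half_of_one_le_mul_one_sub hx₀ (by push_cast; rwa [div_le_iff₀ hpos] at hN)
  linarith [tsum_pow_two_pow_sub_one_le_of_pow_le_half hx₀ hx₁ hq, Nat.ceil_lt_add_one hlogb]

lemma tendsto_log_one_div_one_sub_nhdsLT_one :
    Tendsto (fun x : ℝ => log (1 / (1 - x))) (𝓝[<] 1) atTop := by
  have h : Tendsto (fun x : ℝ => 1 - x) (𝓝[<] 1) (𝓝[>] 0) := by
    refine tendsto_nhdsWithin_iff.mpr ⟨?_, eventually_nhdsWithin_of_forall fun x hx => ?_⟩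
    · exact ((continuous_const.sub continuous_id).tendsto' 1 0 (sub_self 1)).mono_left
        nhdsWithin_le_nhds
    · exact sub_pos.mpr (Set.mem_Iio.mp hx)
  exact (tendsto_log_atTop.comp (tendsto_inv_nhdsGT_zero.comp h)).congr fun x => by
    simp only [Function.comp_apply, one_div]

lemma limsup_div_le_of_eventually_le_mul_add {α : Type*} {l : Filter α} [l.NeBot] {f g : α → ℝ}
    {c C : ℝ} (hg : Tendsto g l atTop) (hf : 0 ≤ᶠ[l] f) (hfg : ∀ᶠ a in l, f a ≤ c * g a + C) :
    limsup (fun a => f a / g a) l ≤ c := by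
  have hlim : Tendsto (fun a => c + C / g a) l (𝓝 c) := by
    simpa using tendsto_const_nhds.add (tendsto_const_nhds.div_atTop hg)
  have hle : ∀ᶠ a in l, f a / g a ≤ c + C / g a := by
    filter_upwards [hfg, hg.eventually_gt_atTop 0] with a ha hga
    rw [div_le_iff₀ hga, add_mul, div_mul_cancel₀ _ hga.ne']
    exact ha
  have hnonneg : ∀ᶠ a in l, 0 ≤ f a / g a := by
    filter_upwards [hf, hg.eventually_gt_atTop 0] with a ha hga
    exact div_nonneg ha hga.le
  calc limsup (fun a => f a / g a) l ≤ limsup (fun a => c + C / g a) l :=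
        limsup_le_limsup hle (isCoboundedUnder_le_of_eventually_le l hnonneg)
          hlim.isBoundedUnder_le
    _ = c := hlim.limsup_eq

theorem po2_tail_sum_heavy_traffic :
    (∀ lam : ℝ, 0 < lam → lam < 1 →
        Summable (fun n : ℕ => lam ^ (2 ^ (n + 1) - 1))) ∧
    Filter.limsup
        (fun lam : ℝ =>
          (∑' n : ℕ, lam ^ (2 ^ (n + 1) - 1)) / Real.log (1 / (1 - lam)))
        (nhdsWithin 1 (Set.Iio 1)) ≤ 1 / Real.log 2 := by
  refine ⟨fun lam h₀ h₁ => summable_pow_two_pow_sub_one h₀.le h₁,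
    limsup_div_le_of_eventually_le_mul_add (C := 2) tendsto_log_one_div_one_sub_nhdsLT_one ?_ ?_⟩
  · filter_upwards [Ioo_mem_nhdsLT zero_lt_one] with lam hlam
    exact tsum_nonneg fun n => pow_nonneg hlam.1.le _
  · filter_upwards [Ioo_mem_nhdsLT zero_lt_one] with lam hlam
    rw [one_div_mul_eq_div, log_div_log]
    exact tsum_pow_two_pow_sub_one_le_logb hlam.1.le hlam.2
end

section
/- Let G : S → ℝ^ℕ be Lipschitz with constant L under the ℓ¹ norm on S ⊆ ℓ¹, and let x : [0,∞) → S be a solution of ẋ(t) = G(x(t)) that converges in ℓ¹ to some x* ∈ S as t → ∞, with x(t) componentwise nondecreasing in t. Then G(x*) = 0. -/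
/-- The state space: nonincreasing sequences in `[0,1]` with finite ℓ¹ norm. -/
def mfState : Set (ℕ → ℝ) :=
  {s | (∀ i : ℕ, s (i + 1) ≤ s i) ∧ (∀ i : ℕ, 0 ≤ s i ∧ s i ≤ 1) ∧ Summable s}

/-!
Since `G` is Lipschitz and `x t → x*` in ℓ¹, each component `G (x t) i` of the velocity tends to
`G x* i`, while the component `x t i` itself converges. A convergent real function whose derivative
has a limit must have derivative limit `0`: by the mean value theorem `x (t + 1) i - x t i`, which
tends to `0`, equals the derivative at some point of `(t, t + 1)`.
-/

open Filter Topology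

theorem eq_zero_of_tendsto_of_tendsto_deriv {f f' : ℝ → ℝ} {a c : ℝ}
    (hderiv : ∀ᶠ t in atTop, HasDerivAt f (f' t) t)
    (hf : Tendsto f atTop (𝓝 a)) (hf' : Tendsto f' atTop (𝓝 c)) : c = 0 := by
  obtain ⟨T, hT⟩ := eventually_atTop.mp hderiv
  have hmvt : ∀ t, ∃ ξ, T ≤ t → t < ξ ∧ f' ξ = f (t + 1) - f t := by
    intro t
    by_cases ht : T ≤ t
    · have hcont : ContinuousOn f (Set.Icc t (t + 1)) := fun s hs =>
        (hT s (ht.trans hs.1)).continuousAt.continuousWithinAt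
      obtain ⟨ξ, hξ, hslope⟩ := exists_hasDerivAt_eq_slope f f' (lt_add_one t) hcont
        fun s hs => hT s (ht.trans hs.1.le)
      exact ⟨ξ, fun _ => ⟨hξ.1, by simpa using hslope⟩⟩
    · exact ⟨t, fun h => absurd h ht⟩
  choose ξ hξ using hmvt
  have hξ_atTop : Tendsto ξ atTop atTop :=
    tendsto_atTop_mono' atTop ((eventually_ge_atTop T).mono fun t ht => (hξ t ht).1.le)
      tendsto_id
  have hincrement : Tendsto (fun t => f (t + 1) - f t) atTop (𝓝 0) := by
    simpa using (hf.comp (tendsto_atTop_add_const_right atTop 1 tendsto_id)).sub hf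
  refine tendsto_nhds_unique (hf'.comp hξ_atTop) (hincrement.congr' ?_)
  filter_upwards [eventually_ge_atTop T] with t ht
  exact ((hξ t ht).2).symm

theorem tendsto_apply_of_tendsto_tsum_abs_sub {α ι : Type*} {l : Filter α} {u : α → ι → ℝ}
    {v : ι → ℝ} (hsum : ∀ᶠ a in l, Summable fun i => |u a i - v i|)
    (h : Tendsto (fun a => ∑' i, |u a i - v i|) l (𝓝 0)) (i : ι) :
    Tendsto (fun a => u a i) l (𝓝 (v i)) := by
  rw [tendsto_iff_dist_tendsto_zero]
  refine squeeze_zero' (Eventually.of_forall fun _ => dist_nonneg) ?_ h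
  filter_upwards [hsum] with a ha
  exact ha.le_tsum i fun j _ => abs_nonneg _

theorem l1_limit_of_monotone_trajectory_is_equilibrium_general
    (G : (ℕ → ℝ) → (ℕ → ℝ)) (L : ℝ)
    (hLip : ∀ a ∈ mfState, ∀ b ∈ mfState,
        Summable (fun i => |G a i - G b i|) ∧
        ∑' i : ℕ, |G a i - G b i| ≤ L * ∑' i : ℕ, |a i - b i|)
    (x : ℝ → ℕ → ℝ) (xs : ℕ → ℝ)
    (hxS : ∀ t : ℝ, 0 ≤ t → x t ∈ mfState) (hxsS : xs ∈ mfState)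
    (hODE : ∀ i : ℕ, ∀ t : ℝ, 0 ≤ t →
        HasDerivAt (fun s => x s i) (G (x t) i) t)
    (hconv : Filter.Tendsto (fun t => ∑' i : ℕ, |x t i - xs i|)
        Filter.atTop (nhds 0)) :
    ∀ i : ℕ, G xs i = 0 := by
  intro i
  have hx_summable : ∀ᶠ t in atTop, Summable fun j => |x t j - xs j| :=
    (eventually_ge_atTop 0).mono fun t ht => ((hxS t ht).2.2.sub hxsS.2.2).abs
  have hGx : Tendsto (fun t => ∑' j, |G (x t) j - G xs j|) atTop (𝓝 0) :=
    squeeze_zero' (Eventually.of_forall fun _ => tsum_nonneg fun _ => abs_nonneg _)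
      ((eventually_ge_atTop 0).mono fun t ht => (hLip _ (hxS t ht) _ hxsS).2)
      (by simpa using hconv.const_mul L)
  have hGx_summable : ∀ᶠ t in atTop, Summable fun j => |G (x t) j - G xs j| :=
    (eventually_ge_atTop 0).mono fun t ht => (hLip _ (hxS t ht) _ hxsS).1
  exact eq_zero_of_tendsto_of_tendsto_deriv
    ((eventually_ge_atTop 0).mono fun t ht => hODE i t ht)
    (tendsto_apply_of_tendsto_tsum_abs_sub hx_summable hconv i)
    (tendsto_apply_of_tendsto_tsum_abs_sub hGx_summable hGx i)

theorem l1_limit_of_monotone_trajectory_is_equilibrium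
    (G : (ℕ → ℝ) → (ℕ → ℝ)) (L : ℝ) (hL : 0 ≤ L)
    (hLip : ∀ a ∈ mfState, ∀ b ∈ mfState,
        Summable (fun i => |G a i - G b i|) ∧
        ∑' i : ℕ, |G a i - G b i| ≤ L * ∑' i : ℕ, |a i - b i|)
    (x : ℝ → ℕ → ℝ) (xs : ℕ → ℝ)
    (hxS : ∀ t : ℝ, 0 ≤ t → x t ∈ mfState) (hxsS : xs ∈ mfState)
    (hODE : ∀ i : ℕ, ∀ t : ℝ, 0 ≤ t →
        HasDerivAt (fun s => x s i) (G (x t) i) t)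
    (hmono : ∀ i : ℕ, ∀ s t : ℝ, 0 ≤ s → s ≤ t → x s i ≤ x t i)
    (hconv : Filter.Tendsto (fun t => ∑' i : ℕ, |x t i - xs i|)
        Filter.atTop (nhds 0)) :
    ∀ i : ℕ, G xs i = 0 :=
  l1_limit_of_monotone_trajectory_is_equilibrium_general G L hLip x xs hxS hxsS hODE hconv
end

section
/- Let M > 0 and let x : [0,∞) → ℝ^ℕ satisfy x_i(0) ∈ [0,1], x_i(t) ∈ [0,1], and x_i(t) ≤ x_i(0) + M·∫_0^t x_{i−1}(s) ds for all i ≥ 1 and t ≥ 0, with x_0(t) ≡ 1. Then x_i(t) ≤ x_i(0) + Σ_{k=0}^{i−1} x_k(0)·(Mt)^{i−k}/(i−k)! for all i ≥ 1, and consequently Σ_{i≥1} x_i(t) ≤ (1 + Σ_{i≥1} x_i(0))·e^{Mt}. -/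
/-!
Iterating the integral inequality starting from `x₀ ≡ 1` bounds `xᵢ(t)` by the `i`-th Picard
iterate `∑_{k ≤ i} xₖ(0) (Mt)^{i-k}/(i-k)!`, which is the `i`-th coefficient of the Cauchy product
of the sequence `(xₖ(0))ₖ` with the exponential series of `Mt`. Summing over `i`, the Cauchy
product formula gives `(∑ₖ xₖ(0)) e^{Mt}`, and `∑ₖ xₖ(0) = 1 + ∑_{i ≥ 1} xᵢ(0)`.
-/

open Finset Nat intervalIntegral

noncomputable def expConv (a : ℕ → ℝ) (c : ℝ) (i : ℕ) : ℝ :=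
  ∑ k ∈ range (i + 1), a k * c ^ (i - k) / (i - k)!

theorem mul_integral_mul_pow_div_factorial (M t : ℝ) (n : ℕ) :
    M * ∫ s in (0 : ℝ)..t, (M * s) ^ n / n ! = (M * t) ^ (n + 1) / (n + 1)! := by
  simp_rw [mul_pow, mul_div_assoc, integral_const_mul, div_eq_mul_inv, integral_mul_const,
    integral_pow]
  push_cast [factorial_succ]
  field_simp
  ring

section

variable (a : ℕ → ℝ)

theorem expConv_zero (c : ℝ) : expConv a c 0 = a 0 := by
  simp [expConv]

theorem expConv_eq_add_sum_range (c : ℝ) (i : ℕ) :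
    expConv a c i = a i + ∑ k ∈ range i, a k * c ^ (i - k) / (i - k)! := by
  rw [expConv, sum_range_succ, Nat.sub_self, pow_zero, factorial_zero, cast_one, mul_one,
    div_one, add_comm]

theorem continuous_expConv_mul (M : ℝ) (i : ℕ) : Continuous fun s => expConv a (M * s) i := by
  unfold expConv
  fun_prop

theorem expConv_succ_eq_add_mul_integral (M t : ℝ) (i : ℕ) :
    expConv a (M * t) (i + 1) = a (i + 1) + M * ∫ s in (0 : ℝ)..t, expConv a (M * s) i := by
  have hintegrable : ∀ k ∈ range (i + 1),
      IntervalIntegrable (fun s => a k * (M * s) ^ (i - k) / (i - k)!) MeasureTheory.volume 0 t :=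
    fun k _ => by apply Continuous.intervalIntegrable; fun_prop
  rw [expConv_eq_add_sum_range]
  simp_rw [expConv]
  rw [integral_finsetSum hintegrable, mul_sum]
  congr 1
  refine sum_congr rfl fun k hk => ?_
  have hk : i + 1 - k = i - k + 1 := by have := mem_range.mp hk; omega
  simp_rw [mul_div_assoc, integral_const_mul, mul_left_comm M,
    mul_integral_mul_pow_div_factorial, hk]

end

theorem hasSum_expConv {a : ℕ → ℝ} (ha : Summable a) (c : ℝ) :
    HasSum (expConv a c) ((∑' k, a k) * Real.exp c) := by
  have hexp := NormedSpace.expSeries_div_hasSum_exp (𝔸 := ℝ) c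
  rw [← Real.exp_eq_exp_ℝ] at hexp
  have hprod := hasSum_sum_range_mul_of_summable_norm ha.norm hexp.summable.norm
  rw [hexp.tsum_eq] at hprod
  unfold expConv
  simp_rw [mul_div_assoc]
  exact hprod

theorem le_expConv_of_le_add_mul_integral {M : ℝ} (hM : 0 ≤ M) {a : ℕ → ℝ} {u : ℕ → ℝ → ℝ}
    (hu : ∀ i t, IntervalIntegrable (u i) MeasureTheory.volume 0 t)
    (h0 : ∀ t, 0 ≤ t → u 0 t ≤ a 0)
    (hstep : ∀ i t, 0 ≤ t → u (i + 1) t ≤ a (i + 1) + M * ∫ s in (0 : ℝ)..t, u i s) :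
    ∀ i t, 0 ≤ t → u i t ≤ expConv a (M * t) i := by
  intro i
  induction i with
  | zero => simpa only [expConv_zero] using h0
  | succ i ih =>
    intro t ht
    rw [expConv_succ_eq_add_mul_integral]
    refine (hstep i t ht).trans (add_le_add_right (mul_le_mul_of_nonneg_left ?_ hM) _)
    exact integral_mono_on ht (hu i t)
      ((continuous_expConv_mul a M i).intervalIntegrable 0 t) fun s hs => ih s hs.1

theorem gronwall_iterated_bound (M : ℝ) (hM : 0 < M)
    (x : ℝ → ℕ → ℝ)
    (hcont : ∀ i : ℕ, Continuous (fun t => x t i))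
    (hx0 : ∀ t : ℝ, x t 0 = 1)
    (hbd : ∀ t : ℝ, 0 ≤ t → ∀ i : ℕ, 0 ≤ x t i ∧ x t i ≤ 1)
    (hint : ∀ i : ℕ, 1 ≤ i → ∀ t : ℝ, 0 ≤ t →
        x t i ≤ x 0 i + M * ∫ s in (0:ℝ)..t, x s (i - 1))
    (hsum0 : Summable (fun n : ℕ => x 0 (n + 1))) :
    (∀ i : ℕ, 1 ≤ i → ∀ t : ℝ, 0 ≤ t →
        x t i ≤ x 0 i + ∑ k ∈ Finset.range i,
          x 0 k * (M * t) ^ (i - k) / (Nat.factorial (i - k) : ℝ)) ∧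
    (∀ t : ℝ, 0 ≤ t →
        ∑' n : ℕ, x t (n + 1) ≤ (1 + ∑' n : ℕ, x 0 (n + 1)) * Real.exp (M * t)) := by
  have hbound : ∀ i t, 0 ≤ t → x t i ≤ expConv (x 0) (M * t) i :=
    le_expConv_of_le_add_mul_integral (u := fun i t => x t i) hM.le
      (fun i t => (hcont i).intervalIntegrable 0 t) (fun t _ => by rw [hx0, hx0])
      (fun i t ht => by simpa using hint (i + 1) (by omega) t ht)
  refine ⟨fun i _ t ht => expConv_eq_add_sum_range (x 0) (M * t) i ▸ hbound i t ht,
    fun t ht => ?_⟩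
  have hsum : Summable (x 0) := (summable_nat_add_iff 1).mp hsum0
  have htail : HasSum (fun n => expConv (x 0) (M * t) (n + 1))
      ((1 + ∑' n, x 0 (n + 1)) * Real.exp (M * t) - 1) := by
    have h := hasSum_expConv hsum (M * t)
    rw [hsum.tsum_eq_zero_add, hx0, ← (hasSum_nat_add_iff' 1)] at h
    simpa [expConv_zero, hx0] using h
  have hxt : Summable fun n => x t (n + 1) :=
    htail.summable.of_nonneg_of_le (fun n => (hbd t ht (n + 1)).1) fun n => hbound (n + 1) t ht
  calc ∑' n, x t (n + 1) ≤ ∑' n, expConv (x 0) (M * t) (n + 1) :=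
        hxt.tsum_le_tsum (fun n => hbound (n + 1) t ht) htail.summable
    _ ≤ (1 + ∑' n, x 0 (n + 1)) * Real.exp (M * t) := by rw [htail.tsum_eq]; linarith
end
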